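/- The supremum over open-loop control sequences of the open-loop reach-avoid probability is at most the optimal closed-loop (Markov policy) reach-avoid probability: sup_{U ∈ 𝒰^N} W_0(x_0, U) ≤ V_0(x_0) for every initial state x_0. -/

import Mathlib

/-!
Induct backwards in time on the claim that `V k` is measurable with values in `[0, 1]` and
dominates `W k · U` for every admissible `U`: one step of the open-loop recursion plays the
single input `U k`, which the supremum in the closed-loop recursion dominates. The substance is
the measurability of `V k`. The map `c ↦ ∫ V (k + 1) y * ψ (y - c)` is continuous, because
translation is continuous in `L¹` and `V (k + 1)` is bounded, so the supremum over `u ∈ 𝒰` is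
lower semicontinuous, hence measurable.
-/

open MeasureTheory Matrix Set
open scoped NNReal

theorem Set.indicator_one_mem_Icc {α : Type*} (s : Set α) (x : α) :
    s.indicator (fun _ => (1 : ℝ)) x ∈ Icc 0 1 := by
  by_cases hx : x ∈ s <;> simp [hx]

theorem Real.norm_le_one_of_mem_Icc {x : ℝ} (hx : x ∈ Icc 0 1) : ‖x‖ ≤ 1 :=
  (Real.norm_of_nonneg hx.1).trans_le hx.2

theorem Real.bddAbove_range_biSup {ι : Type*} {s : Set ι} {f : ι → ℝ} (hf : BddAbove (f '' s)) :
    BddAbove (range fun i => ⨆ _ : i ∈ s, f i) := by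
  obtain ⟨b, hb⟩ := hf
  -- for `i ∉ s` the inner supremum is `sSup ∅ = 0`
  refine ⟨max b 0, ?_⟩
  rintro _ ⟨i, rfl⟩
  by_cases hi : i ∈ s
  · simpa only [ciSup_pos hi] using le_max_of_le_left (hb (mem_image_of_mem f hi))
  · simp [hi]

theorem Real.le_biSup {ι : Type*} {s : Set ι} {f : ι → ℝ} (hf : BddAbove (f '' s)) {i : ι}
    (hi : i ∈ s) : f i ≤ ⨆ j ∈ s, f j :=
  le_ciSup_of_le (Real.bddAbove_range_biSup hf) i (ciSup_pos (f := fun _ => f i) hi).ge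

theorem measurable_biSup_of_continuous {X ι : Type*} [TopologicalSpace X] [MeasurableSpace X]
    [OpensMeasurableSpace X] {s : Set ι} {F : ι → X → ℝ} (hF : ∀ i ∈ s, Continuous (F i))
    (hbdd : ∀ x, BddAbove ((F · x) '' s)) : Measurable fun x => ⨆ i ∈ s, F i x := by
  refine LowerSemicontinuous.measurable
    (lowerSemicontinuous_ciSup (fun x => Real.bddAbove_range_biSup (hbdd x)) fun i => ?_)
  by_cases hi : i ∈ s
  · simpa only [ciSup_pos hi] using (hF i hi).lowerSemicontinuous
  · simpa [hi] using lowerSemicontinuous_const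

theorem lipschitzWith_integral_mul_L1 {α : Type*} [MeasurableSpace α] {μ : Measure α}
    {g : α → ℝ} {C : ℝ≥0} (hg : AEStronglyMeasurable g μ) (hgC : ∀ᵐ a ∂μ, ‖g a‖ ≤ C) :
    LipschitzWith C fun h : α →₁[μ] ℝ => ∫ a, g a * h a ∂μ := by
  have hint (h : α →₁[μ] ℝ) : Integrable (fun a => g a * h a) μ :=
    (L1.integrable_coeFn h).bdd_mul hg hgC
  refine LipschitzWith.of_dist_le_mul fun h₁ h₂ => ?_
  rw [dist_eq_norm, dist_eq_norm, L1.norm_eq_integral_norm, ← integral_sub (hint h₁) (hint h₂),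
    ← integral_const_mul]
  refine (norm_integral_le_integral_norm _).trans (integral_mono_ae ?_ ?_ ?_)
  · exact ((hint h₁).sub (hint h₂)).norm
  · exact (L1.integrable_coeFn (h₁ - h₂)).norm.const_mul _
  · filter_upwards [hgC, Lp.coeFn_sub h₁ h₂] with a ha hsub
    rw [hsub, Pi.sub_apply, ← mul_sub, norm_mul]
    exact mul_le_mul_of_nonneg_right ha (norm_nonneg _)

section Translation

variable {E : Type*} [NormedAddCommGroup E] [MeasurableSpace E] [BorelSpace E] {μ : Measure E}
  [μ.IsAddRightInvariant] {ψ f : E → ℝ}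

theorem continuous_integral_mul_comp_sub [IsLocallyFiniteMeasure μ] [μ.InnerRegularCompactLTTop]
    {C : ℝ≥0} (hψ : Integrable ψ μ) (hf : AEStronglyMeasurable f μ) (hfC : ∀ᵐ y ∂μ, ‖f y‖ ≤ C) :
    Continuous fun c => ∫ y, f y * ψ (y - c) ∂μ := by
  let τ : E → C(E, E) := ContinuousMap.curry ⟨fun p : E × E => p.2 - p.1, by fun_prop⟩
  have hτ (c : E) : MeasurePreserving (τ c) μ μ := measurePreserving_sub_right μ c
  have hΦ : Continuous fun c => Lp.compMeasurePreserving (τ c) (hτ c) (hψ.toL1 ψ) :=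
    continuous_const.compMeasurePreservingLp (ContinuousMap.curry _).continuous hτ
      ENNReal.one_ne_top
  convert (lipschitzWith_integral_mul_L1 hf hfC).continuous.comp hΦ using 1
  ext c
  refine integral_congr_ae ?_
  have hψτ := (hτ c).quasiMeasurePreserving.ae_eq_comp hψ.coeFn_toL1
  filter_upwards [(Lp.coeFn_compMeasurePreserving (hψ.toL1 ψ) (hτ c)).trans hψτ] with y hy
  simp only [Function.comp_apply, hy]
  rfl

theorem MeasureTheory.Integrable.mul_comp_sub_of_mem_Icc (hψ : Integrable ψ μ)
    (hf : AEStronglyMeasurable f μ) (hf01 : ∀ y, f y ∈ Icc 0 1) (c : E) :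
    Integrable (fun y => f y * ψ (y - c)) μ :=
  (hψ.comp_sub_right c).bdd_mul hf <| ae_of_all _ fun y => Real.norm_le_one_of_mem_Icc (hf01 y)

theorem integral_mul_comp_sub_mem_Icc (hψ0 : ∀ z, 0 ≤ ψ z) (hψ : Integrable ψ μ)
    (hψ1 : ∫ z, ψ z ∂μ = 1) (hf : AEStronglyMeasurable f μ) (hf01 : ∀ y, f y ∈ Icc 0 1) (c : E) :
    ∫ y, f y * ψ (y - c) ∂μ ∈ Icc 0 1 := by
  refine ⟨integral_nonneg fun y => mul_nonneg (hf01 y).1 (hψ0 _), ?_⟩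
  calc ∫ y, f y * ψ (y - c) ∂μ ≤ ∫ y, ψ (y - c) ∂μ :=
        integral_mono (hψ.mul_comp_sub_of_mem_Icc hf hf01 c) (hψ.comp_sub_right c)
          fun y => mul_le_of_le_one_left (hψ0 _) (hf01 y).2
    _ = 1 := by rw [integral_sub_right_eq_self, hψ1]

theorem integral_mul_comp_sub_mono {g : E → ℝ} (hψ0 : ∀ z, 0 ≤ ψ z) (hψ : Integrable ψ μ)
    (hf : AEStronglyMeasurable f μ) (hf01 : ∀ y, f y ∈ Icc 0 1) (hgf : ∀ y, g y ∈ Icc 0 (f y))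
    (c : E) : ∫ y, g y * ψ (y - c) ∂μ ≤ ∫ y, f y * ψ (y - c) ∂μ :=
  integral_mono_of_nonneg (ae_of_all _ fun y => mul_nonneg (hgf y).1 (hψ0 _))
    (hψ.mul_comp_sub_of_mem_Icc hf hf01 c)
    (ae_of_all _ fun y => mul_le_mul_of_nonneg_right (hgf y).2 (hψ0 _))

end Translation

section ReachAvoid

variable {n m : ℕ} {A : Matrix (Fin n) (Fin n) ℝ} {B : Matrix (Fin n) (Fin m) ℝ}
  {ψ : (Fin n → ℝ) → ℝ} {𝒮 : Set (Fin n → ℝ)} {𝒰 : Set (Fin m → ℝ)} {f : (Fin n → ℝ) → ℝ}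

variable (A B ψ 𝒮) in
/-- Both dynamic-programming recursions are one application of this operator, up to
definitional unfolding. -/
noncomputable def reachAvoidStep (f : (Fin n → ℝ) → ℝ) (x : Fin n → ℝ) (u : Fin m → ℝ) : ℝ :=
  𝒮.indicator (fun _ => (1 : ℝ)) x * ∫ y, f y * ψ (y - A.mulVec x - B.mulVec u)

theorem reachAvoidStep_mem_Icc (hψ0 : ∀ z, 0 ≤ ψ z) (hψ : Integrable ψ volume)
    (hψ1 : ∫ z, ψ z = 1) (hf : Measurable f) (hf01 : ∀ y, f y ∈ Icc 0 1) (x : Fin n → ℝ)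
    (u : Fin m → ℝ) : reachAvoidStep A B ψ 𝒮 f x u ∈ Icc 0 1 := by
  simp only [reachAvoidStep, sub_sub]
  exact unitInterval.mul_mem (𝒮.indicator_one_mem_Icc x)
    (integral_mul_comp_sub_mem_Icc hψ0 hψ hψ1 hf.aestronglyMeasurable hf01 _)

theorem biSup_reachAvoidStep_mem_Icc (hψ0 : ∀ z, 0 ≤ ψ z) (hψ : Integrable ψ volume)
    (hψ1 : ∫ z, ψ z = 1) (hf : Measurable f) (hf01 : ∀ y, f y ∈ Icc 0 1) (x : Fin n → ℝ) :
    ⨆ u ∈ 𝒰, reachAvoidStep A B ψ 𝒮 f x u ∈ Icc 0 1 :=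
  have h01 u := reachAvoidStep_mem_Icc (A := A) (B := B) (𝒮 := 𝒮) hψ0 hψ hψ1 hf hf01 x u
  ⟨Real.iSup_nonneg fun u => Real.iSup_nonneg fun _ => (h01 u).1,
    Real.iSup_le (fun u => Real.iSup_le (fun _ => (h01 u).2) zero_le_one) zero_le_one⟩

theorem measurable_biSup_reachAvoidStep (h𝒮 : MeasurableSet 𝒮) (hψ0 : ∀ z, 0 ≤ ψ z)
    (hψ : Integrable ψ volume) (hψ1 : ∫ z, ψ z = 1) (hf : Measurable f)
    (hf01 : ∀ y, f y ∈ Icc 0 1) :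
    Measurable fun x => ⨆ u ∈ 𝒰, reachAvoidStep A B ψ 𝒮 f x u := by
  set F : (Fin n → ℝ) → ℝ := fun c => ∫ y, f y * ψ (y - c)
  have hF : Continuous F := continuous_integral_mul_comp_sub (C := 1) hψ hf.aestronglyMeasurable
    (ae_of_all _ fun y => Real.norm_le_one_of_mem_Icc (hf01 y))
  have hF1 c : F c ≤ 1 :=
    (integral_mul_comp_sub_mem_Icc hψ0 hψ hψ1 hf.aestronglyMeasurable hf01 c).2
  have hfactor : (fun x => ⨆ u ∈ 𝒰, reachAvoidStep A B ψ 𝒮 f x u) =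
      fun x => 𝒮.indicator (fun _ => (1 : ℝ)) x * ⨆ u ∈ 𝒰, F (A.mulVec x + B.mulVec u) := by
    ext x
    simp_rw [Real.mul_iSup_of_nonneg (𝒮.indicator_one_mem_Icc x).1, reachAvoidStep, sub_sub, F]
  rw [hfactor]
  refine (measurable_const.indicator h𝒮).mul (measurable_biSup_of_continuous
    (fun u _ => hF.comp (by fun_prop)) fun x => ⟨1, ?_⟩)
  rintro _ ⟨u, -, rfl⟩
  exact hF1 _

theorem reachAvoidStep_le_biSup (hψ0 : ∀ z, 0 ≤ ψ z) (hψ : Integrable ψ volume)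
    (hψ1 : ∫ z, ψ z = 1) (hf : Measurable f) (hf01 : ∀ y, f y ∈ Icc 0 1) {g : (Fin n → ℝ) → ℝ}
    (hgf : ∀ y, g y ∈ Icc 0 (f y)) (x : Fin n → ℝ) {u : Fin m → ℝ} (hu : u ∈ 𝒰) :
    reachAvoidStep A B ψ 𝒮 g x u ≤ ⨆ u ∈ 𝒰, reachAvoidStep A B ψ 𝒮 f x u := by
  calc reachAvoidStep A B ψ 𝒮 g x u ≤ reachAvoidStep A B ψ 𝒮 f x u := by
        simp only [reachAvoidStep, sub_sub]
        exact mul_le_mul_of_nonneg_left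
          (integral_mul_comp_sub_mono hψ0 hψ hf.aestronglyMeasurable hf01 hgf _)
          (𝒮.indicator_one_mem_Icc x).1
    _ ≤ ⨆ u ∈ 𝒰, reachAvoidStep A B ψ 𝒮 f x u := by
        refine Real.le_biSup ⟨1, ?_⟩ hu
        rintro _ ⟨u, -, rfl⟩
        exact (reachAvoidStep_mem_Icc hψ0 hψ hψ1 hf hf01 x u).2

theorem reachAvoidStep_nonneg (hψ0 : ∀ z, 0 ≤ ψ z) (hf0 : ∀ y, 0 ≤ f y) (x : Fin n → ℝ)
    (u : Fin m → ℝ) : 0 ≤ reachAvoidStep A B ψ 𝒮 f x u :=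
  mul_nonneg (𝒮.indicator_one_mem_Icc x).1 (integral_nonneg fun y => mul_nonneg (hf0 y) (hψ0 _))

end ReachAvoid

theorem sup_open_loop_le_closed_loop_general
    {n m : ℕ} (N : ℕ)
    (A : Matrix (Fin n) (Fin n) ℝ) (B : Matrix (Fin n) (Fin m) ℝ)
    (𝒰 : Set (Fin m → ℝ))
    (ψ : (Fin n → ℝ) → ℝ)
    (hψ_nonneg : ∀ z, 0 ≤ ψ z) (hψ_int : Integrable ψ volume)
    (hψ_one : ∫ z, ψ z = 1)
    (𝒮 𝒯 : Set (Fin n → ℝ)) (h𝒮 : MeasurableSet 𝒮) (h𝒯 : MeasurableSet 𝒯)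
    (V : ℕ → (Fin n → ℝ) → ℝ)
    (hVN : ∀ x, V N x = 𝒯.indicator (fun _ => (1 : ℝ)) x)
    (hVk : ∀ k < N, ∀ x, V k x =
      ⨆ u ∈ 𝒰, 𝒮.indicator (fun _ => (1 : ℝ)) x *
        ∫ y, V (k + 1) y * ψ (y - A.mulVec x - B.mulVec u))
    (W : ℕ → (Fin n → ℝ) → (ℕ → Fin m → ℝ) → ℝ)
    (hWN : ∀ x U, W N x U = 𝒯.indicator (fun _ => (1 : ℝ)) x)
    (hWk : ∀ k < N, ∀ x U, W k x U =
      𝒮.indicator (fun _ => (1 : ℝ)) x *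
        ∫ y, W (k + 1) y U * ψ (y - A.mulVec x - B.mulVec (U k))) :
    ∀ x₀ : Fin n → ℝ,
      ⨆ U ∈ {U : ℕ → Fin m → ℝ | ∀ j, U j ∈ 𝒰}, W 0 x₀ U ≤ V 0 x₀ := by
  intro x₀
  have invariant : ∀ k ≤ N, (Measurable (V k) ∧ ∀ x, V k x ∈ Icc 0 1) ∧
      ∀ U ∈ {U : ℕ → Fin m → ℝ | ∀ j, U j ∈ 𝒰}, ∀ x, W k x U ∈ Icc 0 (V k x) := by
    intro k hk
    induction hk using Nat.decreasingInduction with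
    | self =>
      refine ⟨⟨funext hVN ▸ measurable_const.indicator h𝒯, fun x => ?_⟩, fun U _ x => ?_⟩
      · exact hVN x ▸ 𝒯.indicator_one_mem_Icc x
      · rw [hWN, hVN]
        exact ⟨(𝒯.indicator_one_mem_Icc x).1, le_rfl⟩
    | of_succ k hk ih =>
      obtain ⟨⟨hVm, hV01⟩, hWV⟩ := ih
      have hV : V k = fun x => ⨆ u ∈ 𝒰, reachAvoidStep A B ψ 𝒮 (V (k + 1)) x u :=
        funext (hVk k hk)
      refine ⟨hV ▸ ⟨measurable_biSup_reachAvoidStep h𝒮 hψ_nonneg hψ_int hψ_one hVm hV01,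
        biSup_reachAvoidStep_mem_Icc hψ_nonneg hψ_int hψ_one hVm hV01⟩, fun U hU x => ?_⟩
      rw [hWk k hk x U, hV]
      exact ⟨reachAvoidStep_nonneg hψ_nonneg (fun y => (hWV U hU y).1) x (U k),
        reachAvoidStep_le_biSup hψ_nonneg hψ_int hψ_one hVm hV01 (hWV U hU) x (hU k)⟩
  obtain ⟨⟨-, hV01⟩, hWV⟩ := invariant 0 N.zero_le
  exact Real.iSup_le (fun U => Real.iSup_le (fun hU => (hWV U hU x₀).2) (hV01 x₀).1) (hV01 x₀).1

/-- The supremum over open-loop control sequences of the open-loop reach-avoid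
probability is at most the optimal closed-loop (Markov policy) reach-avoid
probability. -/
theorem sup_open_loop_le_closed_loop
    {n m : ℕ} (N : ℕ)
    (A : Matrix (Fin n) (Fin n) ℝ) (B : Matrix (Fin n) (Fin m) ℝ)
    (𝒰 : Set (Fin m → ℝ)) (h𝒰c : IsCompact 𝒰) (h𝒰ne : 𝒰.Nonempty)
    (ψ : (Fin n → ℝ) → ℝ)
    (hψ_cont : Continuous ψ) (hψ_bdd : ∃ C, ∀ z, ψ z ≤ C)
    (hψ_nonneg : ∀ z, 0 ≤ ψ z) (hψ_int : Integrable ψ volume)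
    (hψ_one : ∫ z, ψ z = 1)
    (𝒮 𝒯 : Set (Fin n → ℝ)) (h𝒮 : MeasurableSet 𝒮) (h𝒯 : MeasurableSet 𝒯)
    (V : ℕ → (Fin n → ℝ) → ℝ)
    (hVN : ∀ x, V N x = 𝒯.indicator (fun _ => (1 : ℝ)) x)
    (hVk : ∀ k < N, ∀ x, V k x =
      ⨆ u ∈ 𝒰, 𝒮.indicator (fun _ => (1 : ℝ)) x *
        ∫ y, V (k + 1) y * ψ (y - A.mulVec x - B.mulVec u))
    (W : ℕ → (Fin n → ℝ) → (ℕ → Fin m → ℝ) → ℝ)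
    (hWN : ∀ x U, W N x U = 𝒯.indicator (fun _ => (1 : ℝ)) x)
    (hWk : ∀ k < N, ∀ x U, W k x U =
      𝒮.indicator (fun _ => (1 : ℝ)) x *
        ∫ y, W (k + 1) y U * ψ (y - A.mulVec x - B.mulVec (U k))) :
    ∀ x₀ : Fin n → ℝ,
      ⨆ U ∈ {U : ℕ → Fin m → ℝ | ∀ j, U j ∈ 𝒰}, W 0 x₀ U ≤ V 0 x₀ :=
  sup_open_loop_le_closed_loop_general N A B 𝒰 ψ hψ_nonneg hψ_int hψ_one 𝒮 𝒯 h𝒮 h𝒯 V hVN hVk W hWN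
    hWk
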